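/- For any integer k, the domination ratio γ̄(ℤ, {1, 3k+2}) equals 1/3. -/

import Mathlib

open Filter

open scoped Classical in
noncomputable def lowerDensity (U : Set ℤ) : ℝ :=
  Filter.liminf (fun n : ℕ =>
    (((Finset.Icc (-(n:ℤ)) (n:ℤ)).filter (fun m => m ∈ U)).card : ℝ) / (2*(n:ℝ)+1))
    Filter.atTop

/-- `D` is a dominating set of the Cayley digraph `Γ(ℤ, S)`. -/
def IsDominating (S D : Set ℤ) : Prop :=
  ∀ v : ℤ, v ∈ D ∨ ∃ u ∈ D, ∃ s ∈ S, v = u + s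

/-- The domination ratio of `Γ(ℤ, S)`. -/
noncomputable def domRatio (S : Set ℤ) : ℝ :=
  sInf {x : ℝ | ∃ D : Set ℤ, IsDominating S D ∧ x = lowerDensity D}

/-!
If `D` dominates `Γ(ℤ, S)` then `D + (S ∪ {0})` covers `ℤ`, so every window `[-n, n]` contains at
least `(2n + 1 - O(1)) / (|S| + 1)` points of `D`; for `S = {1, 3k + 2}` this gives density at
least `1/3`. Conversely `3ℤ` is dominating, since `1` and `3k + 2` cover the two nonzero
residues mod `3`.
-/

open Topology Pointwise

open scoped Classical in
noncomputable def countIcc (U : Set ℤ) (n : ℕ) : ℕ :=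
  ((Finset.Icc (-(n:ℤ)) n).filter (fun m => m ∈ U)).card

theorem lowerDensity_eq_liminf_countIcc (U : Set ℤ) :
    lowerDensity U = liminf (fun n : ℕ => (countIcc U n : ℝ) / (2 * n + 1)) atTop :=
  rfl

theorem countIcc_eq_card_filter (U : Set ℤ) [DecidablePred (· ∈ U)] (n : ℕ) :
    countIcc U n = ((Finset.Icc (-(n:ℤ)) n).filter (· ∈ U)).card := by
  rw [countIcc]
  congr

theorem countIcc_le (U : Set ℤ) (n : ℕ) : countIcc U n ≤ 2 * n + 1 := by
  classical
  calc countIcc U n = _ := countIcc_eq_card_filter U n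
    _ ≤ (Finset.Icc (-(n:ℤ)) n).card := Finset.card_filter_le _ _
    _ = 2 * n + 1 := by rw [Int.card_Icc]; omega

theorem tendsto_affine_div (a b : ℝ) :
    Tendsto (fun n : ℕ => (a * n + b) / (2 * n + 1)) atTop (𝓝 (a / 2)) := by
  have h0 := tendsto_one_div_atTop_nhds_zero_nat (𝕜 := ℝ)
  have h := ((tendsto_const_nhds (x := a)).add (h0.const_mul b)).div
    ((tendsto_const_nhds (x := (2:ℝ))).add h0) (by norm_num)
  rw [mul_zero, add_zero, add_zero] at h
  refine h.congr' ?_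
  filter_upwards [eventually_ge_atTop 1] with n hn
  have hn' : (n:ℝ) ≠ 0 := by positivity
  simp only [Pi.div_apply]
  field_simp

theorem le_lowerDensity_of_eventually_affine_le {U : Set ℤ} {a b : ℝ}
    (h : ∀ᶠ n : ℕ in atTop, a * n + b ≤ countIcc U n) : a / 2 ≤ lowerDensity U := by
  have hlim := tendsto_affine_div a b
  have hcobdd : atTop.IsCoboundedUnder (· ≥ ·)
      (fun n : ℕ => (countIcc U n : ℝ) / (2 * n + 1)) := by
    refine IsBoundedUnder.isCoboundedUnder_ge (isBoundedUnder_of ⟨1, fun n => ?_⟩)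
    rw [div_le_one (by positivity)]
    exact_mod_cast countIcc_le U n
  rw [← hlim.liminf_eq, lowerDensity_eq_liminf_countIcc]
  refine liminf_le_liminf ?_ hlim.isBoundedUnder_ge hcobdd
  filter_upwards [h] with n hn
  gcongr

theorem lowerDensity_eq_of_eventually_affine_bounds {U : Set ℤ} {a b c : ℝ}
    (hlo : ∀ᶠ n : ℕ in atTop, a * n + b ≤ countIcc U n)
    (hhi : ∀ᶠ n : ℕ in atTop, (countIcc U n : ℝ) ≤ a * n + c) :
    lowerDensity U = a / 2 := by
  rw [lowerDensity_eq_liminf_countIcc]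
  refine (tendsto_of_tendsto_of_tendsto_of_le_of_le' (tendsto_affine_div a b)
    (tendsto_affine_div a c) ?_ ?_).liminf_eq
  · filter_upwards [hlo] with n hn
    gcongr
  · filter_upwards [hhi] with n hn
    gcongr

theorem countIcc_multiples (q : ℤ) (hq : 0 < q) (n : ℕ) :
    (countIcc {m | q ∣ m} n : ℤ) = 2 * (n / q) + 1 := by
  have hbound (c : ℤ) :
      (-(n:ℤ) ≤ q * c ∧ q * c ≤ n) ↔ (-(n / q) ≤ c ∧ c ≤ n / q) := by
    rw [← abs_le, ← abs_le, abs_mul, abs_of_pos hq, Int.le_ediv_iff_mul_le hq, mul_comm]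
  have himage : (Finset.Icc (-(n:ℤ)) n).filter (· ∈ {m : ℤ | q ∣ m})
      = (Finset.Icc (-(n / q)) (n / q)).image (q * ·) := by
    ext m
    simp only [Finset.mem_filter, Finset.mem_Icc, Finset.mem_image, Set.mem_ofPred_eq]
    constructor
    · rintro ⟨hm, c, rfl⟩
      exact ⟨c, (hbound c).1 hm, rfl⟩
    · rintro ⟨c, hc, rfl⟩
      exact ⟨(hbound c).2 hc, dvd_mul_right q c⟩
  have hnq : 0 ≤ (n:ℤ) / q := Int.ediv_nonneg (by positivity) hq.le
  rw [countIcc_eq_card_filter, himage,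
    Finset.card_image_of_injective _ (mul_right_injective₀ hq.ne'), Int.card_Icc]
  omega

theorem lowerDensity_multiples (q : ℤ) (hq : 0 < q) :
    lowerDensity {m | q ∣ m} = 1 / q := by
  have hqR : (0:ℝ) < q := by exact_mod_cast hq
  have hcount (n : ℕ) : (countIcc {m | q ∣ m} n : ℝ) = 2 * ((n / q : ℤ) : ℝ) + 1 := by
    exact_mod_cast countIcc_multiples q hq n
  have key := lowerDensity_eq_of_eventually_affine_bounds (U := {m | q ∣ m}) (a := 2 / q)
    (b := 1 - 2 * (q - 1) / q) (c := 1) (Eventually.of_forall fun n => ?_)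
    (Eventually.of_forall fun n => ?_)
  · rw [key]; ring
  · have h : (n:ℤ) ≤ q * (n / q) + (q - 1) := by
      linarith [Int.lt_mul_ediv_self_add (x := n) hq]
    have hR : (n:ℝ) ≤ q * ((n / q : ℤ) : ℝ) + (q - 1) := by exact_mod_cast h
    have hsplit :
        2 / q * n + (1 - 2 * (q - 1) / q) = 2 * (n - (q - 1)) / (q:ℝ) + 1 := by
      field_simp
      ring
    rw [hcount, hsplit, add_le_add_iff_right, div_le_iff₀ hqR]
    linarith
  · have hR : (q:ℝ) * ((n / q : ℤ) : ℝ) ≤ n := by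
      exact_mod_cast Int.mul_ediv_self_le hq.ne'
    rw [hcount, add_le_add_iff_right, div_mul_eq_mul_div, le_div_iff₀ hqR]
    linarith

theorem IsDominating.one_div_card_add_one_le_lowerDensity {S : Finset ℤ} {D : Set ℤ}
    (hD : IsDominating S D) : 1 / (S.card + 1 : ℝ) ≤ lowerDensity D := by
  classical
  set M := S.sup Int.natAbs
  have hcover (n : ℕ) : 2 * (n - M : ℤ) + 1 ≤ (countIcc D n * (S.card + 1) : ℕ) := by
    set T := (Finset.Icc (-(n:ℤ)) n).filter (· ∈ D)
    have hsub : Finset.Icc (-(n - M : ℤ)) (n - M) ⊆ T + insert 0 S := by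
      intro v hv
      rw [Finset.mem_Icc] at hv
      rw [Finset.mem_add]
      rcases hD v with hvD | ⟨u, huD, s, hs, rfl⟩
      · exact ⟨v, Finset.mem_filter.2 ⟨Finset.mem_Icc.2 ⟨by omega, by omega⟩, hvD⟩, 0,
          Finset.mem_insert_self _ _, add_zero v⟩
      · have hsM : s.natAbs ≤ M := Finset.le_sup (f := Int.natAbs) hs
        exact ⟨u, Finset.mem_filter.2 ⟨Finset.mem_Icc.2 ⟨by omega, by omega⟩, huD⟩, s,
          Finset.mem_insert_of_mem hs, rfl⟩
    have hcard := (Finset.card_le_card hsub).trans (Finset.card_add_le.trans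
      (Nat.mul_le_mul_left _ (Finset.card_insert_le 0 S)))
    rw [Int.card_Icc, ← countIcc_eq_card_filter] at hcard
    omega
  have key := le_lowerDensity_of_eventually_affine_le (U := D) (a := 2 / (S.card + 1))
    (b := (1 - 2 * M) / (S.card + 1)) (Eventually.of_forall fun n => ?_)
  · convert key using 1
    ring
  · have hR : 2 * ((n:ℝ) - M) + 1 ≤ countIcc D n * (S.card + 1) := by exact_mod_cast hcover n
    rw [div_mul_eq_mul_div, ← add_div, div_le_iff₀ (by positivity)]
    linarith

theorem isDominating_multiples_three (k : ℤ) : IsDominating {1, 3 * k + 2} {m | 3 ∣ m} := by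
  intro v
  rcases (show v % 3 = 0 ∨ v % 3 = 1 ∨ v % 3 = 2 by omega) with h | h | h
  · exact Or.inl (show (3:ℤ) ∣ v by omega)
  · exact Or.inr ⟨v - 1, show (3:ℤ) ∣ v - 1 by omega, 1, Set.mem_insert _ _, by ring⟩
  · exact Or.inr ⟨v - (3 * k + 2), show (3:ℤ) ∣ v - (3 * k + 2) by omega, 3 * k + 2,
      Set.mem_insert_of_mem _ rfl, by ring⟩

theorem isDominating_univ (S : Set ℤ) : IsDominating S Set.univ :=
  fun v => Or.inl (Set.mem_univ v)

theorem lowerDensity_nonneg (U : Set ℤ) : 0 ≤ lowerDensity U := by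
  simpa using le_lowerDensity_of_eventually_affine_le (U := U) (a := 0) (b := 0)
    (Eventually.of_forall fun n => by simp)

theorem domRatio_le_lowerDensity {S D : Set ℤ} (hD : IsDominating S D) :
    domRatio S ≤ lowerDensity D :=
  csInf_le ⟨0, by rintro _ ⟨D, -, rfl⟩; exact lowerDensity_nonneg D⟩ ⟨D, hD, rfl⟩

theorem one_div_card_add_one_le_domRatio (S : Finset ℤ) :
    1 / (S.card + 1 : ℝ) ≤ domRatio S :=
  le_csInf ⟨_, Set.univ, isDominating_univ _, rfl⟩ <| by
    rintro _ ⟨D, hD, rfl⟩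
    exact hD.one_div_card_add_one_le_lowerDensity

theorem stmt_15 (k : ℤ) : domRatio {1, 3*k + 2} = 1/3 := by
  refine le_antisymm ?_ ?_
  · calc domRatio {1, 3*k + 2} ≤ lowerDensity {m | 3 ∣ m} :=
          domRatio_le_lowerDensity (isDominating_multiples_three k)
      _ = 1/3 := by rw [lowerDensity_multiples 3 three_pos]; norm_num
  · have hcard : (({1, 3*k + 2} : Finset ℤ).card : ℝ) ≤ 2 := by
      exact_mod_cast Finset.card_le_two
    calc (1/3 : ℝ) ≤ 1 / (({1, 3*k + 2} : Finset ℤ).card + 1) := by gcongr; linarith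
      _ ≤ domRatio ↑({1, 3*k + 2} : Finset ℤ) := one_div_card_add_one_le_domRatio _
      _ = domRatio {1, 3*k + 2} := by push_cast; rfl
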